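/- Fix t ∈ (0,1) and define g(t,θ) = (1/2)(𝒥(1−t+2θ) − 𝒥(1−t) − 𝒥(1+2θ)) for θ > −(1−t)/2, where 𝒥(u) = u log u − u + 1. Then for every y < 0, the supremum over θ > −(1−t)/2 of θy − g(t,θ) equals (1/2)H(1−t | e^y), where H(x|p) = x log(x/p) + (1−x) log((1−x)/(1−p)); moreover the supremum is attained at θ = −(1/2)(1 − t/(1 − e^y)). -/

import Mathlib

open Real

/-!
Substituting `θ = (a + t - 1) / 2`, so that `𝒥` is evaluated at `a` and `a + t`, turns
`θ y - g(t,θ)` into `(a y - φ a) / 2` plus terms independent of `a`, where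
`φ a = a log a - (a + t) log (a + t)`. The function `φ` is convex: its tangent-line inequality is
the two-term log-sum inequality, i.e. convexity of `x log x`. Its slope `log (a / (a + t))` equals
`y` exactly at `a = t e^y / (1 - e^y)`, which is therefore the maximiser, and the value there is
`H(1 - t | e^y) / 2`.
-/

/-- `𝒥(u) = u log u − u + 1` for `u > 0`, with `𝒥(0) = 1`. -/
noncomputable def J (u : ℝ) : ℝ := if u = 0 then 1 else u * log u - u + 1

/-- `g(t,θ) = (1/2)(𝒥(1−t+2θ) − 𝒥(1−t) − 𝒥(1+2θ))`. -/
noncomputable def g (t θ : ℝ) : ℝ := (1 / 2) * (J (1 - t + 2 * θ) - J (1 - t) - J (1 + 2 * θ))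

/-- Entropy function `H(x|p) = x log(x/p) + (1−x) log((1−x)/(1−p))`. -/
noncomputable def entH (x p : ℝ) : ℝ := x * log (x / p) + (1 - x) * log ((1 - x) / (1 - p))

theorem J_eq_mul_log (u : ℝ) : J u = u * log u - u + 1 := by
  by_cases hu : u = 0 <;> simp [J, hu]

theorem add_mul_log_div_add_le {u₁ u₂ v₁ v₂ : ℝ} (hu₁ : 0 ≤ u₁) (hu₂ : 0 ≤ u₂) (hv₁ : 0 < v₁)
    (hv₂ : 0 < v₂) :
    (u₁ + u₂) * log ((u₁ + u₂) / (v₁ + v₂)) ≤ u₁ * log (u₁ / v₁) + u₂ * log (u₂ / v₂) := by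
  have hv : 0 < v₁ + v₂ := by positivity
  have hconv := convexOn_mul_log.2 (Set.mem_Ici.2 (div_nonneg hu₁ hv₁.le))
    (Set.mem_Ici.2 (div_nonneg hu₂ hv₂.le)) (div_pos hv₁ hv).le (div_pos hv₂ hv).le
    (by field_simp)
  have hmix : v₁ / (v₁ + v₂) * (u₁ / v₁) + v₂ / (v₁ + v₂) * (u₂ / v₂) = (u₁ + u₂) / (v₁ + v₂) := by
    field_simp
  simp only [smul_eq_mul, hmix] at hconv
  field_simp at hconv
  linarith

theorem tangent_le_mul_log_sub_add_mul_log_add {t a b : ℝ} (ht : 0 < t) (ha : 0 < a) (hb : 0 < b) :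
    b * log b - (b + t) * log (b + t) + (a - b) * (log b - log (b + t)) ≤
      a * log a - (a + t) * log (a + t) := by
  have hls := add_mul_log_div_add_le ha.le ht.le hb ht
  rw [div_self ht.ne', log_one, mul_zero, add_zero, log_div (by positivity) (by positivity),
    log_div ha.ne' hb.ne'] at hls
  linarith

theorem mul_sub_g_eq (t y a : ℝ) :
    (a + t - 1) / 2 * y - g t ((a + t - 1) / 2) =
      ((a + t - 1) * y - a * log a + (a + t) * log (a + t) + (1 - t) * log (1 - t)) / 2 := by
  have hA : 1 - t + 2 * ((a + t - 1) / 2) = a := by ring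
  have hC : 1 + 2 * ((a + t - 1) / 2) = a + t := by ring
  rw [g, hA, hC, J_eq_mul_log, J_eq_mul_log, J_eq_mul_log]
  ring

theorem mul_log_sub_g_eq_entH {t p b : ℝ} (ht₀ : 0 < t) (ht₁ : t < 1) (hp₀ : 0 < p) (hp₁ : p < 1)
    (hb : b = t * p / (1 - p)) :
    (b + t - 1) / 2 * log p - g t ((b + t - 1) / 2) = 1 / 2 * entH (1 - t) p := by
  have hq : 0 < 1 - p := by linarith
  have hbt : b + t = t / (1 - p) := by rw [hb]; field_simp; ring
  have hlogb : log b = log t + log p - log (1 - p) := by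
    rw [hb, log_div (by positivity) hq.ne', log_mul ht₀.ne' hp₀.ne']
  rw [mul_sub_g_eq, entH, sub_sub_cancel, log_div (by linarith) hp₀.ne', log_div ht₀.ne' hq.ne',
    hbt, log_div ht₀.ne' hq.ne', ← hbt, hlogb]
  ring

/-- For `t ∈ (0,1)` and `y < 0`,
`sup_{θ > −(1−t)/2} (θ y − g(t,θ)) = (1/2) H(1−t | e^y)`, attained at
`θ = −(1/2)(1 − t/(1 − e^y))`. -/
theorem legendre_g (t y : ℝ) (ht : t ∈ Set.Ioo (0:ℝ) 1) (hy : y < 0) :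
    IsGreatest {z | ∃ θ : ℝ, -(1 - t) / 2 < θ ∧ z = θ * y - g t θ}
        ((1 / 2) * entH (1 - t) (exp y)) ∧
      (-(1 / 2) * (1 - t / (1 - exp y))) * y - g t (-(1 / 2) * (1 - t / (1 - exp y)))
        = (1 / 2) * entH (1 - t) (exp y) := by
  obtain ⟨ht₀, ht₁⟩ := ht
  have hp₁ : exp y < 1 := exp_lt_one_iff.mpr hy
  have hq : 0 < 1 - exp y := by linarith
  obtain ⟨b, hb⟩ : ∃ b, b = t * exp y / (1 - exp y) := ⟨_, rfl⟩
  have hb₀ : 0 < b := by rw [hb]; positivity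
  have hθ : -(1 / 2) * (1 - t / (1 - exp y)) = (b + t - 1) / 2 := by
    rw [hb]; field_simp [hq.ne']; ring
  have hval := log_exp y ▸ mul_log_sub_g_eq_entH ht₀ ht₁ (exp_pos y) hp₁ hb
  have hslope : y = log b - log (b + t) := by
    have hratio : b / (b + t) = exp y := by rw [hb]; field_simp; ring
    rw [← log_div hb₀.ne' (by positivity), hratio, log_exp]
  rw [hθ]
  refine ⟨⟨⟨_, by linarith, hval.symm⟩, ?_⟩, hval⟩
  rintro _ ⟨θ, hθ_dom, rfl⟩
  obtain ⟨a, rfl⟩ : ∃ a, θ = (a + t - 1) / 2 := ⟨1 - t + 2 * θ, by ring⟩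
  have htan := tangent_le_mul_log_sub_add_mul_log_add ht₀ (a := a) (by linarith) hb₀
  rw [← hval, mul_sub_g_eq, mul_sub_g_eq]
  linear_combination htan / 2 + (a - b) / 2 * hslope
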